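/- arXiv:1601.04631 — 2 statements merged into one kernel-verified Lean document; each statement's English description precedes it below -/
import Mathlib

section
/- Let C be an abelian category with a central charge Z in which every object is both Noetherian and Artinian. Then every Z-semistable object E admits a finite filtration 0 = F₀ ⊂ F₁ ⊂ ⋯ ⊂ F_n = E by subobjects (with strict inclusions) such that each subquotient F_i/F_{i−1} is Z-stable of the same slope as E (a Jordan–Hölder filtration inside the subcategory of semistable objects of that slope). -/
open CategoryTheory CategoryTheory.Limits

/-- `arg z ≤ arg w` for arguments taken in `(0, π]`. -/
def argLE (z w : ℂ) : Prop := 0 ≤ ((starRingEnd ℂ) z * w).im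

/-- `arg z < arg w` for arguments taken in `(0, π]`. -/
def argLT (z w : ℂ) : Prop := 0 < ((starRingEnd ℂ) z * w).im

/-- `z` and `w` have the same argument (slope). -/
def sameSlope (z w : ℂ) : Prop := ((starRingEnd ℂ) z * w).im = 0

/-- membership in `H₊ = {z : Im z > 0, or Im z = 0 and Re z < 0}`. -/
def memHPlus (z : ℂ) : Prop := 0 < z.im ∨ (z.im = 0 ∧ z.re < 0)

/-- A central charge on an abelian category: additive on short exact sequences and
taking values in `H₊` on nonzero objects. -/
def IsCentralCharge {C : Type*} [Category C] [Abelian C] (Z : C → ℂ) : Prop :=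
  (∀ S : ShortComplex C, S.ShortExact → Z S.X₂ = Z S.X₁ + Z S.X₃) ∧
  (∀ E : C, ¬ IsZero E → memHPlus (Z E))

/-- A nonzero object `E` is `Z`-semistable if `arg Z(E') ≤ arg Z(E)` for every nonzero
subobject `E'` of `E`. -/
def IsSemistable {C : Type*} [Category C] [Abelian C] (Z : C → ℂ) (E : C) : Prop :=
  ¬ IsZero E ∧ ∀ E' : Subobject E, ¬ IsZero (E' : C) → argLE (Z (E' : C)) (Z E)

/-- A nonzero object `E` is `Z`-stable if `arg Z(E') < arg Z(E)` for every nonzero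
proper subobject `E'` of `E`. -/
def IsStable {C : Type*} [Category C] [Abelian C] (Z : C → ℂ) (E : C) : Prop :=
  ¬ IsZero E ∧ ∀ E' : Subobject E, ¬ IsZero (E' : C) → E' ≠ ⊤ → argLT (Z (E' : C)) (Z E)

/-- A finite filtration `0 = F₀ ⊂ F₁ ⊂ ⋯ ⊂ Fₙ = V` of `V` by subobjects, with strict
inclusions. -/
structure Filtration {C : Type*} [Category C] [Abelian C] (V : C) where
  n : ℕ
  F : Fin (n + 1) → Subobject V
  bot_eq : F 0 = ⊥
  top_eq : F (Fin.last n) = ⊤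
  lt : ∀ i : Fin n, F i.castSucc < F i.succ

/-- The `i`-th subquotient `F_{i+1}/F_i` of a filtration. -/
noncomputable def Filtration.quot {C : Type*} [Category C] [Abelian C] {V : C}
    (Φ : Filtration V) (i : Fin Φ.n) : C :=
  cokernel (Subobject.ofLE (Φ.F i.castSucc) (Φ.F i.succ) (Φ.lt i).le)

/-! ### Auxiliary lemmas on complex numbers -/

section CxLemmas

lemma zcross_def (z w : ℂ) : ((starRingEnd ℂ) z * w).im = z.re * w.im - z.im * w.re := by
  simp [Complex.mul_im, Complex.conj_re, Complex.conj_im]; ring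

lemma zcross_swap (z w : ℂ) : ((starRingEnd ℂ) z * w).im = -((starRingEnd ℂ) w * z).im := by
  rw [zcross_def, zcross_def]; ring

lemma zcross_self (z : ℂ) : ((starRingEnd ℂ) z * z).im = 0 := by rw [zcross_def]; ring

lemma zcross_add_left (x y w : ℂ) : ((starRingEnd ℂ) (x + y) * w).im =
    ((starRingEnd ℂ) x * w).im + ((starRingEnd ℂ) y * w).im := by
  simp only [zcross_def, Complex.add_re, Complex.add_im]; ring

lemma zcross_smul_left (t : ℝ) (x w : ℂ) : ((starRingEnd ℂ) ((t : ℂ) * x) * w).im =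
    t * ((starRingEnd ℂ) x * w).im := by
  rw [zcross_def, zcross_def]
  simp only [Complex.mul_re, Complex.mul_im, Complex.ofReal_re, Complex.ofReal_im]
  ring

lemma zcross_smul_right (t : ℝ) (x w : ℂ) : ((starRingEnd ℂ) x * ((t : ℂ) * w)).im =
    t * ((starRingEnd ℂ) x * w).im := by
  rw [zcross_def, zcross_def]
  simp only [Complex.mul_re, Complex.mul_im, Complex.ofReal_re, Complex.ofReal_im]
  ring

lemma memHPlus.ne_zero {z : ℂ} (h : memHPlus z) : z ≠ 0 := by
  rintro rfl
  rcases h with h | ⟨h1, h2⟩ <;> simp at *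

lemma memHPlus_add {z w : ℂ} (hz : memHPlus z) (hw : memHPlus w) : memHPlus (z + w) := by
  rcases hz with h | ⟨h1, h2⟩ <;> rcases hw with g | ⟨g1, g2⟩ <;>
    simp only [memHPlus, Complex.add_im, Complex.add_re]
  · left; linarith
  · left; linarith
  · left; linarith
  · right; constructor <;> linarith

lemma memHPlus_smul {z : ℂ} {t : ℝ} (ht : 0 < t) (hz : memHPlus z) : memHPlus ((t : ℂ) * z) := by
  rcases hz with h | ⟨h1, h2⟩ <;> simp only [memHPlus, Complex.mul_im, Complex.mul_re,
    Complex.ofReal_re, Complex.ofReal_im]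
  · left; nlinarith
  · right; constructor <;> nlinarith

lemma pos_of_memHPlus_smul {z : ℂ} {t : ℝ} (hz : memHPlus z) (h : memHPlus ((t : ℂ) * z)) :
    0 < t := by
  by_contra hc
  push_neg at hc
  simp only [memHPlus, Complex.mul_im, Complex.mul_re, Complex.ofReal_re,
    Complex.ofReal_im] at h
  rcases hz with g | ⟨g1, g2⟩ <;> rcases h with h | ⟨h1, h2⟩
  · nlinarith
  · have ht0 : t = 0 := by nlinarith
    rw [ht0] at h2; linarith
  · nlinarith
  · nlinarith

/-- Two elements of `H₊` with the same slope are positive real multiples of each other. -/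
lemma exists_pos_smul_of_sameSlope {z w : ℂ} (hz : memHPlus z) (hw : memHPlus w)
    (h : sameSlope z w) : ∃ t : ℝ, 0 < t ∧ w = (t : ℂ) * z := by
  rw [sameSlope, zcross_def] at h
  rcases hz with g | ⟨g1, g2⟩
  · refine ⟨w.im / z.im, ?_, ?_⟩
    · rcases hw with k | ⟨k1, k2⟩
      · positivity
      · exfalso; rw [k1] at h; nlinarith [mul_pos g (neg_pos.mpr k2)]
    · apply Complex.ext <;>
        simp only [Complex.mul_re, Complex.mul_im, Complex.ofReal_re, Complex.ofReal_im] <;>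
        field_simp <;> nlinarith
  · rcases hw with k | ⟨k1, k2⟩
    · exfalso; rw [g1] at h; nlinarith [mul_neg_of_neg_of_pos g2 k]
    · refine ⟨w.re / z.re, div_pos_of_neg_of_neg k2 g2, ?_⟩
      apply Complex.ext
      · simp only [Complex.mul_re, Complex.ofReal_re, Complex.ofReal_im, g1]
        rw [div_mul_cancel₀ _ g2.ne]; ring
      · simp only [Complex.mul_im, Complex.ofReal_re, Complex.ofReal_im, g1, k1]
        ring

end CxLemmas

/-! ### Auxiliary lemmas on central charges in abelian categories -/

section CatLemmas

variable {C : Type*} [Category C] [Abelian C] {Z : C → ℂ} (hZ : IsCentralCharge Z)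
include hZ

omit hZ in
lemma shortExact_of_mono {A B : C} (f : A ⟶ B) [Mono f] :
    (ShortComplex.mk f (cokernel.π f) (cokernel.condition f)).ShortExact where
  exact := ShortComplex.exact_of_g_is_cokernel _ (cokernelIsCokernel f)
  mono_f := ‹_›
  epi_g := by dsimp; infer_instance

lemma Z_add {A B : C} (f : A ⟶ B) [Mono f] : Z B = Z A + Z (cokernel f) :=
  hZ.1 _ (shortExact_of_mono f)

lemma Z_isZero {A : C} (h : IsZero A) : Z A = 0 := by
  have hse : (ShortComplex.mk (𝟙 A) (𝟙 A) (h.eq_of_src _ _)).ShortExact :=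
    { exact := ShortComplex.exact_of_isZero_X₂ _ h }
  have h2 := hZ.1 _ hse
  exact add_eq_left.mp h2.symm

lemma Z_iso {A B : C} (e : A ≅ B) : Z A = Z B := by
  have h := Z_add hZ e.hom
  rw [Z_isZero hZ ((isZero_zero C).of_iso (cokernel.ofEpi e.hom)), add_zero] at h
  exact h.symm

lemma not_isZero_of_Z {A : C} (h : Z A ≠ 0) : ¬ IsZero A :=
  fun h0 => h (Z_isZero hZ h0)

omit hZ in
lemma eq_top_of_isZero_cokernel {M : C} (X : Subobject M) (h : IsZero (cokernel X.arrow)) :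
    X = ⊤ := by
  have hπ : (𝟙 M) ≫ cokernel.π X.arrow = 0 := h.eq_of_tgt _ _
  haveI : IsSplitEpi X.arrow :=
    ⟨⟨⟨Abelian.monoLift X.arrow (𝟙 M) hπ, Abelian.monoLift_comp _ _ _⟩⟩⟩
  haveI : IsIso X.arrow := isIso_of_mono_of_epi _
  exact Subobject.eq_top_of_isIso_arrow X

/-- Pulling back a subobject of the quotient `M/X` yields a subobject `Y` with `X ≤ Y`,
`Z(Y) = Z(X) + Z(W)` and `Y/X ≅ W`. -/
lemma exists_preimage {M : C} (X : Subobject M) (W : Subobject (cokernel X.arrow)) :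
    ∃ (Y : Subobject M) (hXY : X ≤ Y),
      Z ((Y : C)) = Z ((X : C)) + Z ((W : C)) ∧
      Nonempty (cokernel (Subobject.ofLE X Y hXY) ≅ ((W : C))) := by
  set π := cokernel.π X.arrow with hπ
  set m := pullback.fst π W.arrow with hm
  set p := pullback.snd π W.arrow with hp
  have hcond : m ≫ π = p ≫ W.arrow := pullback.condition
  have hi0 : X.arrow ≫ π = 0 := cokernel.condition _
  set i : (X : C) ⟶ pullback π W.arrow := pullback.lift X.arrow 0 (by simp [hi0]) with hidef
  have him : i ≫ m = X.arrow := pullback.lift_fst _ _ _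
  have hip : i ≫ p = 0 := pullback.lift_snd _ _ _
  haveI : Mono i := mono_of_mono_fac him
  have hker : IsLimit (KernelFork.ofι i hip) := by
    refine KernelFork.IsLimit.ofι i hip
      (fun {T} x hx => Abelian.monoLift X.arrow (x ≫ m) ?_)
      (fun {T} x hx => ?_) (fun {T} x hx y hy => ?_)
    · rw [Category.assoc, hcond, ← Category.assoc, hx, zero_comp]
    · rw [← cancel_mono m, Category.assoc, him, Abelian.monoLift_comp]
    · rw [← cancel_mono X.arrow, Abelian.monoLift_comp]
      conv_lhs => rw [← him]
      rw [← Category.assoc, hy]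
  have hse : (ShortComplex.mk i p hip).ShortExact :=
    { exact := ShortComplex.exact_of_f_is_kernel _ hker
      epi_g := by dsimp; infer_instance }
  have hZP : Z (pullback π W.arrow) = Z ((X : C)) + Z ((W : C)) := hZ.1 _ hse
  refine ⟨Subobject.mk m, Subobject.le_mk_of_comm i him, ?_, ?_⟩
  · rw [Z_iso hZ (Subobject.underlyingIso m)]; exact hZP
  · set u := Subobject.underlyingIso m
    have hju : Subobject.ofLE X (Subobject.mk m) (Subobject.le_mk_of_comm i him) ≫ u.hom = i := by
      rw [← cancel_mono m, Category.assoc]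
      show _ ≫ u.hom ≫ m = _
      rw [Subobject.underlyingIso_hom_comp_eq_mk, Subobject.ofLE_arrow]
      exact him.symm
    have e1 : cokernel (Subobject.ofLE X (Subobject.mk m) (Subobject.le_mk_of_comm i him)) ≅
        cokernel i :=
      cokernel.mapIso (Subobject.ofLE X (Subobject.mk m) (Subobject.le_mk_of_comm i him)) i
        (Iso.refl _) u (by simpa using hju)
    have hcoker : IsColimit (CokernelCofork.ofπ p hip) := hse.exact.gIsCokernel
    exact ⟨e1 ≪≫ (cokernelIsCokernel i).coconePointUniqueUpToIso hcoker⟩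

/-- Stability is invariant under isomorphism. -/
lemma isStable_of_iso {A B : C} (h : IsStable Z A) (e : A ≅ B) : IsStable Z B := by
  refine ⟨fun hB => h.1 (hB.of_iso e), fun B' hB'ne hB'top => ?_⟩
  haveI : Mono (B'.arrow ≫ e.inv) := mono_comp _ _
  set A' : Subobject A := Subobject.mk (B'.arrow ≫ e.inv) with hA'
  have hiso : ((A' : C)) ≅ ((B' : C)) := Subobject.underlyingIso _
  have hA'ne : ¬ IsZero ((A' : C)) := fun hz => hB'ne (hz.of_iso hiso.symm)
  have hA'top : A' ≠ ⊤ := by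
    intro htop
    haveI : IsIso (B'.arrow ≫ e.inv) := (Subobject.isIso_iff_mk_eq_top _).mpr htop
    have : IsIso B'.arrow := by
      have hfac : B'.arrow = (B'.arrow ≫ e.inv) ≫ e.hom := by simp
      rw [hfac]; infer_instance
    exact hB'top (Subobject.eq_top_of_isIso_arrow B')
  have := h.2 A' hA'ne hA'top
  rwa [argLT, Z_iso hZ hiso, Z_iso hZ e] at this

/-- The key induction step: a proper subobject `X` of a semistable object `E` with
`Z(X) = t·Z(E)` can be enlarged to `Y` with `Y/X` stable of the same slope. -/
lemma exists_step {E : C} (hE : IsSemistable Z E)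
    (hArt : ∀ X : C, WellFoundedLT (Subobject X))
    (X : Subobject E) (hX : X ≠ ⊤) {t : ℝ} (ht : 0 ≤ t)
    (hZX : Z ((X : C)) = (t : ℂ) * Z E) :
    ∃ (Y : Subobject E) (hXY : X < Y) (s : ℝ), 0 < s ∧
      Z ((Y : C)) = ((t + s : ℝ) : ℂ) * Z E ∧
      IsStable Z (cokernel (Subobject.ofLE X Y hXY.le)) ∧
      sameSlope (Z (cokernel (Subobject.ofLE X Y hXY.le))) (Z E) := by
  obtain ⟨hEne, hEss⟩ := hE
  have hζ : memHPlus (Z E) := hZ.2 E hEne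
  have hQne : ¬ IsZero (cokernel X.arrow) := fun h => hX (eq_top_of_isZero_cokernel X h)
  have hZQ : Z (cokernel X.arrow) = ((1 - t : ℝ) : ℂ) * Z E := by
    have h := Z_add hZ X.arrow
    rw [hZX] at h
    push_cast
    linear_combination -h
  have h1t : 0 < 1 - t := pos_of_memHPlus_smul hζ (hZQ ▸ hZ.2 _ hQne)
  -- semistability of the quotient, with slopes compared to `Z E`
  have hQss : ∀ W : Subobject (cokernel X.arrow), ¬ IsZero ((W : C)) →
      0 ≤ ((starRingEnd ℂ) (Z ((W : C))) * Z E).im := by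
    intro W hW
    obtain ⟨Y, hXY, hZY, -⟩ := exists_preimage hZ X W
    have hWmem : memHPlus (Z ((W : C))) := hZ.2 _ hW
    have hsum : memHPlus ((t : ℂ) * Z E + Z ((W : C))) := by
      rcases ht.lt_or_eq with h | h
      · exact memHPlus_add (memHPlus_smul h hζ) hWmem
      · rw [← h]; simpa using hWmem
    have hYne : ¬ IsZero ((Y : C)) :=
      not_isZero_of_Z hZ (by rw [hZY, hZX]; exact hsum.ne_zero)
    have h0 := hEss Y hYne
    rw [argLE, hZY, hZX, zcross_add_left, zcross_smul_left, zcross_self, mul_zero, zero_add] at h0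
    exact h0
  -- a minimal nonzero subobject of the quotient with the same slope as `E`
  have htopne : ¬ IsZero (((⊤ : Subobject (cokernel X.arrow)) : C)) :=
    fun h => hQne (h.of_iso (asIso (Subobject.arrow ⊤)).symm)
  have htopsl : sameSlope (Z (((⊤ : Subobject (cokernel X.arrow)) : C))) (Z E) := by
    rw [sameSlope, Z_iso hZ (asIso (Subobject.arrow ⊤)), hZQ, zcross_smul_left, zcross_self,
      mul_zero]
  obtain ⟨A, ⟨hAne, hAsl⟩, hAmin⟩ := ((hArt (cokernel X.arrow)).wf).has_min
    {A : Subobject (cokernel X.arrow) | ¬ IsZero ((A : C)) ∧ sameSlope (Z ((A : C))) (Z E)}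
    ⟨⊤, htopne, htopsl⟩
  have hAmem : memHPlus (Z ((A : C))) := hZ.2 _ hAne
  have hAsl' : sameSlope (Z E) (Z ((A : C))) := by
    rw [sameSlope, zcross_swap]
    rw [sameSlope] at hAsl
    rw [hAsl, neg_zero]
  obtain ⟨a, ha, hZA⟩ := exists_pos_smul_of_sameSlope hζ hAmem hAsl'
  -- the minimal subobject is stable
  have hAst : IsStable Z ((A : C)) := by
    refine ⟨hAne, fun B hBne hBtop => ?_⟩
    haveI : Mono (B.arrow ≫ A.arrow) := mono_comp _ _
    set B' : Subobject (cokernel X.arrow) := Subobject.mk (B.arrow ≫ A.arrow) with hB'def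
    have hB'iso : ((B' : C)) ≅ ((B : C)) := Subobject.underlyingIso _
    have hB'ne : ¬ IsZero ((B' : C)) := fun h => hBne (h.of_iso hB'iso.symm)
    have h0 : 0 ≤ ((starRingEnd ℂ) (Z ((B : C))) * Z E).im := by
      have := hQss B' hB'ne
      rwa [Z_iso hZ hB'iso] at this
    rw [argLT, hZA, zcross_smul_right]
    rcases h0.lt_or_eq with h | h
    · exact mul_pos ha h
    · exfalso
      have hB'le : B' ≤ A := by
        have := Subobject.mk_le_mk_of_comm (f₁ := B.arrow ≫ A.arrow) (f₂ := A.arrow) B.arrow rfl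
        rwa [Subobject.mk_arrow] at this
      have hB'sl : sameSlope (Z ((B' : C))) (Z E) := by
        rw [sameSlope, Z_iso hZ hB'iso, ← h]
      have hnlt : ¬ B' < A := hAmin B' ⟨hB'ne, hB'sl⟩
      have hBA : B' = A := (hB'le.lt_or_eq).resolve_left hnlt
      have hZBA : Z ((B : C)) = Z ((A : C)) := by
        rw [← Z_iso hZ hB'iso, hBA]
      have hadd := Z_add hZ B.arrow
      have hcne : ¬ IsZero (cokernel B.arrow) :=
        fun hc => hBtop (eq_top_of_isZero_cokernel B hc)
      exact (hZ.2 _ hcne).ne_zero (by linear_combination -hadd - hZBA)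
  -- pull back `A` to a subobject of `E`
  obtain ⟨Y, hXY, hZY, ⟨e⟩⟩ := exists_preimage hZ X A
  have hZAne : Z ((A : C)) ≠ 0 := hAmem.ne_zero
  have hlt : X < Y := by
    refine lt_of_le_of_ne hXY (fun h => hZAne ?_)
    have h2 : Z ((X : C)) = Z ((Y : C)) := by rw [h]
    rw [hZY] at h2
    linear_combination -h2
  refine ⟨Y, hlt, a, ha, ?_, ?_, ?_⟩
  · rw [hZY, hZX, hZA]; push_cast; ring
  · show IsStable Z (cokernel (Subobject.ofLE X Y hXY))
    exact isStable_of_iso hZ hAst e.symm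
  · show sameSlope (Z (cokernel (Subobject.ofLE X Y hXY))) (Z E)
    rw [sameSlope, Z_iso hZ e, hZA, zcross_smul_left, zcross_self, mul_zero]

omit hZ in
/-- Congruence helper for statements about subquotients. -/
lemma quot_congr {M : C} {A B A' B' : Subobject M} (hA : A' = A) (hB : B' = B)
    {h : A ≤ B} {h' : A' ≤ B'} (P : C → Prop)
    (hp : P (cokernel (Subobject.ofLE A B h))) : P (cokernel (Subobject.ofLE A' B' h')) := by
  subst hA; subst hB; exact hp

end CatLemmas

/-- In an abelian category with a central charge in which all objects are Noetherian and
Artinian, every `Z`-semistable object `E` admits a Jordan–Hölder filtration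
`0 = F₀ ⊂ F₁ ⊂ ⋯ ⊂ Fₙ = E` whose subquotients are `Z`-stable of the same slope as `E`. -/
theorem exists_jordanHolder_filtration {C : Type*} [Category C] [Abelian C]
    (Z : C → ℂ) (hZ : IsCentralCharge Z)
    (hNoeth : ∀ X : C, WellFoundedGT (Subobject X))
    (hArt : ∀ X : C, WellFoundedLT (Subobject X))
    (E : C) (hE : IsSemistable Z E) :
    ∃ Φ : Filtration E, ∀ i : Fin Φ.n,
      IsStable Z (Φ.quot i) ∧ sameSlope (Z (Φ.quot i)) (Z E) := by
  classical
  set Good : Subobject E → Prop := fun X =>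
    (∃ t : ℝ, 0 ≤ t ∧ Z ((X : C)) = (t : ℂ) * Z E) ∧
    ∃ n : ℕ, ∃ F : Fin (n + 1) → Subobject E, F 0 = ⊥ ∧ F (Fin.last n) = X ∧
      ∃ hlt : ∀ i : Fin n, F i.castSucc < F i.succ,
      ∀ i : Fin n, IsStable Z (cokernel (Subobject.ofLE _ _ (hlt i).le)) ∧
        sameSlope (Z (cokernel (Subobject.ofLE _ _ (hlt i).le))) (Z E) with hGood
  have hbot : Good ⊥ := by
    refine ⟨⟨0, le_refl 0, ?_⟩, 0, fun _ => ⊥, rfl, rfl, fun i => i.elim0, fun i => i.elim0⟩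
    rw [Z_isZero hZ ((isZero_zero C).of_iso Subobject.botCoeIsoZero)]
    simp
  obtain ⟨X, hXGood, hXmax⟩ := ((hNoeth E).wf).has_min {X | Good X} ⟨⊥, hbot⟩
  have hXtop : X = ⊤ := by
    by_contra hX
    obtain ⟨⟨t, ht, hZX⟩, n, F, h0, hl, hlt, hq⟩ := hXGood
    obtain ⟨Y, hXY, s, hs, hZY, hst, hsl⟩ := exists_step hZ hE hArt X hX ht hZX
    refine hXmax Y ?_ hXY
    constructor
    · exact ⟨t + s, by linarith, hZY⟩
    refine ⟨n + 1, Fin.snoc F Y, ?_, ?_, ?_⟩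
    · rw [show (0 : Fin (n + 2)) = Fin.castSucc 0 from rfl, Fin.snoc_castSucc, h0]
    · rw [Fin.snoc_last]
    · have hvc : ∀ j : Fin n, (Fin.snoc F Y : Fin (n + 2) → Subobject E) j.castSucc.castSucc
          = F j.castSucc := fun j => Fin.snoc_castSucc _ _ _
      have hvs : ∀ j : Fin n, (Fin.snoc F Y : Fin (n + 2) → Subobject E) j.castSucc.succ
          = F j.succ := by
        intro j
        rw [Fin.succ_castSucc, Fin.snoc_castSucc]
      have hlc : (Fin.snoc F Y : Fin (n + 2) → Subobject E) (Fin.last n).castSucc = X := by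
        rw [Fin.snoc_castSucc, hl]
      have hls : (Fin.snoc F Y : Fin (n + 2) → Subobject E) (Fin.last n).succ = Y := by
        rw [Fin.succ_last, Fin.snoc_last]
      have hlt' : ∀ i : Fin (n + 1),
          (Fin.snoc F Y : Fin (n + 2) → Subobject E) i.castSucc
            < (Fin.snoc F Y : Fin (n + 2) → Subobject E) i.succ := by
        intro i
        refine Fin.lastCases ?_ (fun j => ?_) i
        · rw [hlc, hls]; exact hXY
        · rw [hvc j, hvs j]; exact hlt j
      refine ⟨hlt', ?_⟩
      intro i
      refine Fin.lastCases ?_ (fun j => ?_) i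
      · exact quot_congr hlc hls
          (fun Q => IsStable Z Q ∧ sameSlope (Z Q) (Z E)) ⟨hst, hsl⟩
      · exact quot_congr (hvc j) (hvs j)
          (fun Q => IsStable Z Q ∧ sameSlope (Z Q) (Z E)) (hq j)
  rw [hXtop] at hXGood
  obtain ⟨-, n, F, h0, hl, hlt, hq⟩ := hXGood
  exact ⟨⟨n, F, h0, hl, hlt⟩, fun i => hq i⟩
end

section
/- For every natural number m and every d ∈ ℕ, the d-th coefficient b_{m,d} ∈ ℚ(q) of B_m(t), written as a quotient of coprime polynomials, has denominator not vanishing at q = −1, so its value b_{m,d}(−1) ∈ ℚ is defined; moreover the specialized series β_m(t) := Σ_{d≥0} b_{m,d}(−1)·t^d ∈ ℚ[[t]] satisfies the equation β_m = 1 + (−1)^{m+1}·t·β_m^m. (This is the Euler-characteristic specialization q^{1/2} ↦ −1 of the motivic series B^{(m)}.) -/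
/-!
Comparing coefficients shows `A(q²t) = A(t) + q^{m+1} t A(q^{2m} t)`. Dividing by `A(t)` and
telescoping `A(q^{2m} t) / A(t) = ∏_{j<m} B(q^{2j} t)` gives
`B = 1 + q^{m+1} t ∏_{j<m} B(q^{2j} t)`, which expresses each coefficient of `B` as a polynomial
in `q` and the earlier coefficients. So all coefficients lie in the subring of `ℚ(q)` of functions
regular at `q = -1`, on which evaluation at `-1` is a ring homomorphism; it sends `q^{m+1}` to
`(-1)^{m+1}` and turns every rescaling by `q^{2j}` into the identity, which yields
`β = 1 + (-1)^{m+1} t β^m`.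
-/

/-- The variable `q` of `K = ℚ(q)`, playing the role of `𝕃^{1/2}`. -/
noncomputable def q : RatFunc ℚ := RatFunc.X

/-- The `d`-th coefficient `q^{m d² + d} / ∏_{i=1}^{d} (q^{2i} - 1)` of the generating
series of the stack of representations of the `m`-loop quiver. -/
noncomputable def a (m : ℤ) (d : ℕ) : RatFunc ℚ :=
  q ^ (m * (d : ℤ) ^ 2 + (d : ℤ)) * (∏ i ∈ Finset.Icc 1 d, (q ^ (2 * i) - 1))⁻¹

/-- The generating series `A_m(t) = Σ_d a_d t^d` of the `m`-loop quiver. -/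
noncomputable def A (m : ℤ) : PowerSeries (RatFunc ℚ) := PowerSeries.mk (a m)

/-- `B_m(t) := A_m(q² t) / A_m(t)`. -/
noncomputable def B (m : ℕ) : PowerSeries (RatFunc ℚ) :=
  PowerSeries.rescale (q ^ 2) (A m) * (A m)⁻¹

/-- The `d`-th coefficient of `B_m`, a rational function in `ℚ(q)`. -/
noncomputable def b (m : ℕ) (d : ℕ) : RatFunc ℚ := PowerSeries.coeff (R := RatFunc ℚ) d (B m)

universe u

namespace RatFunc

variable {K L : Type u} [Field K] [Field L]

def regularAt (f : K →+* L) (a : L) : Subring K⟮X⟯ where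
  carrier := {x | x.denom.eval₂ f a ≠ 0}
  one_mem' := by simp [denom_one]
  zero_mem' := by simp [denom_zero]
  mul_mem' {x y} hx hy h := by
    have := Polynomial.eval₂_eq_zero_of_dvd_of_eval₂_eq_zero f a (denom_mul_dvd x y) h
    simp_all
  add_mem' {x y} hx hy h := by
    have := Polynomial.eval₂_eq_zero_of_dvd_of_eval₂_eq_zero f a (denom_add_dvd x y) h
    simp_all
  neg_mem' {x} hx h := by
    have hdvd := denom_mul_dvd (C (-1)) x
    rw [denom_C, one_mul, map_neg, map_one, neg_one_mul] at hdvd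
    exact hx (Polynomial.eval₂_eq_zero_of_dvd_of_eval₂_eq_zero f a hdvd h)

noncomputable def evalRingHom (f : K →+* L) (a : L) : regularAt f a →+* L where
  toFun x := eval f a x
  map_one' := eval_one f a
  map_zero' := eval_zero f a
  map_mul' x y := eval_mul f a x.2 y.2
  map_add' x y := eval_add f a x.2 y.2

theorem X_mem_regularAt (f : K →+* L) (a : L) : X ∈ regularAt f a := by
  simp [regularAt, denom_X]

theorem evalRingHom_X (f : K →+* L) (a : L) : evalRingHom f a ⟨X, X_mem_regularAt f a⟩ = a :=
  eval_X f a

end RatFunc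

namespace PowerSeries

variable {R : Type*} [CommRing R] {ι : Type*}

theorem coeff_mem_of_eq_one_add_C_mul_X_mul_prod_rescale (S : Subring R) {f : R⟦X⟧} {c : R}
    {s : Finset ι} {r : ι → R} (hc : c ∈ S) (hr : ∀ i, r i ∈ S)
    (hf : f = 1 + C c * X * ∏ i ∈ s, rescale (r i) f) (n : ℕ) : coeff n f ∈ S := by
  classical
  induction n using Nat.strong_induction_on with
  | _ n ih =>
    cases n with
    | zero => rw [hf]; simp
    | succ e =>
      rw [hf, map_add, coeff_one, if_neg e.succ_ne_zero, zero_add, mul_assoc, coeff_C_mul,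
        coeff_succ_X_mul, coeff_prod]
      refine mul_mem hc (sum_mem fun l hl => prod_mem fun i hi => ?_)
      have hle : l i ≤ e := (Finset.mem_finsuppAntidiag.mp hl).1 ▸
        Finset.single_le_sum (fun j _ => Nat.zero_le (l j)) hi
      rw [coeff_rescale]
      exact mul_mem (pow_mem (hr i) _) (ih (l i) (Nat.lt_succ_of_le hle))

theorem exists_map_subtype_eq_one_add_C_mul_X_mul_prod_rescale (S : Subring R) {f : R⟦X⟧}
    {c : R} {s : Finset ι} {r : ι → R} (hc : c ∈ S) (hr : ∀ i, r i ∈ S)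
    (hf : f = 1 + C c * X * ∏ i ∈ s, rescale (r i) f) :
    ∃ g : S⟦X⟧, g.map S.subtype = f ∧
      g = 1 + C ⟨c, hc⟩ * X * ∏ i ∈ s, rescale ⟨r i, hr i⟩ g := by
  let g : S⟦X⟧ :=
    mk fun n => ⟨coeff n f, coeff_mem_of_eq_one_add_C_mul_X_mul_prod_rescale S hc hr hf n⟩
  have hg : g.map S.subtype = f := by ext n; simp [g]
  refine ⟨g, hg, map_injective S.subtype Subtype.val_injective ?_⟩
  simpa [hg, ← rescale_map] using hf

end PowerSeries

open PowerSeries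

theorem q_ne_zero : q ≠ 0 := RatFunc.X_ne_zero

theorem q_pow_sub_one_ne_zero {n : ℕ} (hn : n ≠ 0) : q ^ n - 1 ≠ 0 := by
  rw [q, ← RatFunc.algebraMap_X, ← map_pow, ← map_one (algebraMap (Polynomial ℚ) (RatFunc ℚ)),
    ← map_sub]
  refine RatFunc.algebraMap_ne_zero ?_
  simpa using Polynomial.X_pow_sub_C_ne_zero (Nat.pos_of_ne_zero hn) (1 : ℚ)

theorem a_zero (m : ℤ) : a m 0 = 1 := by
  simp [a]

theorem a_succ_mul (m e : ℕ) :
    a m (e + 1) * (q ^ (2 * (e + 1)) - 1) = q ^ (m * (2 * e + 1) + 1) * a m e := by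
  rw [a, a, Finset.prod_Icc_succ_top (by omega), mul_inv, mul_assoc, mul_assoc,
    inv_mul_cancel₀ (q_pow_sub_one_ne_zero (by omega)), mul_one, ← mul_assoc, ← zpow_natCast,
    ← zpow_add₀ q_ne_zero]
  congr 2
  push_cast
  ring

theorem constantCoeff_A (m : ℤ) : constantCoeff (A m) = 1 := by
  rw [A, ← coeff_zero_eq_constantCoeff_apply, coeff_mk, a_zero]

theorem rescale_q_sq_A (m : ℕ) :
    rescale (q ^ 2) (A m) = A m + C (q ^ (m + 1)) * X * rescale (q ^ (2 * m)) (A m) := by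
  ext (_ | e)
  · simp [A, a_zero]
  · have key := a_succ_mul m e
    simp only [A, coeff_rescale, coeff_mk, map_add, mul_assoc, coeff_C_mul, coeff_succ_X_mul]
    rw [← pow_mul, ← pow_mul, ← mul_assoc, ← pow_add]
    linear_combination key

theorem B_mul_A (m : ℕ) : B m * A m = rescale (q ^ 2) (A m) := by
  rw [B, mul_assoc, PowerSeries.inv_mul_cancel _ (by simp [constantCoeff_A]), mul_one]

theorem rescale_A_eq_prod_rescale_B_mul_A (m n : ℕ) :
    rescale (q ^ (2 * n)) (A m) = (∏ j ∈ Finset.range n, rescale (q ^ (2 * j)) (B m)) * A m := by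
  induction n with
  | zero => simp
  | succ n ih =>
    rw [Finset.prod_range_succ, mul_right_comm, ← ih, ← map_mul, mul_comm (A m), B_mul_A,
      rescale_rescale, ← pow_add, mul_add_one, add_comm]

theorem B_eq_one_add_C_mul_X_mul_prod_rescale (m : ℕ) :
    B m = 1 + C (q ^ (m + 1)) * X * ∏ j ∈ Finset.range m, rescale (q ^ (2 * j)) (B m) := by
  have hA : A m ≠ 0 := fun h => by simpa [h] using constantCoeff_A m
  refine mul_right_cancel₀ hA ?_
  rw [B_mul_A, rescale_q_sq_A, rescale_A_eq_prod_rescale_B_mul_A]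
  ring

theorem b_mem_regularAt (m d : ℕ) : b m d ∈ RatFunc.regularAt (RingHom.id ℚ) (-1) :=
  coeff_mem_of_eq_one_add_C_mul_X_mul_prod_rescale _ (pow_mem (RatFunc.X_mem_regularAt _ _) _)
    (fun _ => pow_mem (RatFunc.X_mem_regularAt _ _) _) (B_eq_one_add_C_mul_X_mul_prod_rescale m) d

/-- The Euler-characteristic specialization `q ↦ −1` of `B_m` is defined (the reduced
denominator of each coefficient does not vanish at `q = −1`), and the specialized series
`β_m(t) = Σ_d b_{m,d}(−1) t^d` satisfies `β_m = 1 + (−1)^{m+1} t β_m^m`. -/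
theorem B_euler_specialization (m : ℕ) :
    (∀ d : ℕ, Polynomial.eval (-1 : ℚ) (b m d).denom ≠ 0) ∧
    PowerSeries.mk (fun d => RatFunc.eval (RingHom.id ℚ) (-1) (b m d)) =
      1 + PowerSeries.C (R := ℚ) ((-1) ^ (m + 1)) * PowerSeries.X *
        (PowerSeries.mk fun d => RatFunc.eval (RingHom.id ℚ) (-1) (b m d)) ^ m := by
  refine ⟨b_mem_regularAt m, ?_⟩
  set S := RatFunc.regularAt (RingHom.id ℚ) (-1)
  set ev := RatFunc.evalRingHom (RingHom.id ℚ) (-1)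
  have hq : q ∈ S := RatFunc.X_mem_regularAt _ _
  have ev_q_pow (k : ℕ) : ev ⟨q ^ k, pow_mem hq k⟩ = (-1) ^ k := by
    rw [show (⟨q ^ k, pow_mem hq k⟩ : S) = ⟨q, hq⟩ ^ k from rfl, map_pow]
    exact congrArg (· ^ k) (RatFunc.evalRingHom_X _ _)
  obtain ⟨g, hgB, hg⟩ := exists_map_subtype_eq_one_add_C_mul_X_mul_prod_rescale S
    (pow_mem hq (m + 1)) (fun j => pow_mem hq (2 * j)) (B_eq_one_add_C_mul_X_mul_prod_rescale m)
  have hβ : mk (fun d => RatFunc.eval (RingHom.id ℚ) (-1) (b m d)) = g.map ev := by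
    ext d
    rw [coeff_mk, coeff_map, b, ← hgB]
    rfl
  rw [hβ]
  simpa [← rescale_map, ev_q_pow] using congrArg (map ev) hg
end
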